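/- Let p > 2, q = p/(p-1), ε ∈ (0,1/2), δ = 2q(q-1)ε/85, and let Q be the Nazarov–Treil Bellman function. In the region Ω_b = {(ζ,η) ∈ ℝ²×ℝ² : |ζ|^p < |η|^q}, for |φ| ≤ φ_{p_ε} and all ω₁ ∈ ℝ²: ⟨(H₁(Q) + tan φ · I₁(Q))(ζ,η) ω₁, ω₁⟩ ≥ 2δ|η|^{2-q}|ω₁|², where H₁(Q) is the 2×2 Hessian block of Q in the ζ variables and I₁(Q) is the matrix [[∂²_{ζ₁ζ₂}Q, (∂²_{ζ₂ζ₂}Q - ∂²_{ζ₁ζ₁}Q)/2],[(∂²_{ζ₂ζ₂}Q - ∂²_{ζ₁ζ₁}Q)/2, -∂²_{ζ₁ζ₂}Q]]. -/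

import Mathlib

noncomputable section
open Real Matrix

def qexp (p : ℝ) : ℝ := p / (p - 1)

/-- The Nazarov–Treil Bellman function on `ℂ × ℂ ≅ ℝ² × ℝ²`. -/
def Q (p δ : ℝ) (ζ η : ℂ) : ℝ :=
  if ‖ζ‖ ^ p ≤ ‖η‖ ^ qexp p then
    ‖ζ‖ ^ p + ‖η‖ ^ qexp p +
      δ * (‖ζ‖ ^ (2 : ℝ) * ‖η‖ ^ (2 - qexp p))
  else
    ‖ζ‖ ^ p + ‖η‖ ^ qexp p +
      δ * ((2 / p) * ‖ζ‖ ^ p + (2 / qexp p - 1) * ‖η‖ ^ qexp p)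

/-- Coordinate directions in `ℂ ≅ ℝ²`. -/
def dir : Fin 2 → ℂ := ![1, Complex.I]

/-- Partial derivative of `Q` in the `i`-th coordinate of the `ζ` variable. -/
def dζ (p δ : ℝ) (i : Fin 2) (ζ η : ℂ) : ℝ :=
  deriv (fun t : ℝ => Q p δ (ζ + (t : ℂ) * dir i) η) 0

/-- Partial derivative of `Q` in the `i`-th coordinate of the `η` variable. -/
def dη (p δ : ℝ) (i : Fin 2) (ζ η : ℂ) : ℝ :=
  deriv (fun t : ℝ => Q p δ ζ (η + (t : ℂ) * dir i)) 0

/-- The `ζζ` block of the Hessian of `Q`: `(H₁)ᵢⱼ = ∂²_{ζᵢζⱼ} Q`. -/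
def H1 (p δ : ℝ) (ζ η : ℂ) : Matrix (Fin 2) (Fin 2) ℝ :=
  Matrix.of fun i j => deriv (fun s : ℝ => dζ p δ j (ζ + (s : ℂ) * dir i) η) 0

/-- The mixed `ζη` block of the Hessian of `Q`: `(H₂)ᵢⱼ = ∂²_{ζᵢηⱼ} Q`. -/
def H2 (p δ : ℝ) (ζ η : ℂ) : Matrix (Fin 2) (Fin 2) ℝ :=
  Matrix.of fun i j => deriv (fun s : ℝ => dη p δ j (ζ + (s : ℂ) * dir i) η) 0

/-- The `ηη` block of the Hessian of `Q`: `(H₃)ᵢⱼ = ∂²_{ηᵢηⱼ} Q`. -/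
def H3 (p δ : ℝ) (ζ η : ℂ) : Matrix (Fin 2) (Fin 2) ℝ :=
  Matrix.of fun i j => deriv (fun s : ℝ => dη p δ j ζ (η + (s : ℂ) * dir i)) 0

def I1 (p δ : ℝ) (ζ η : ℂ) : Matrix (Fin 2) (Fin 2) ℝ :=
  !![H1 p δ ζ η 0 1, (H1 p δ ζ η 1 1 - H1 p δ ζ η 0 0) / 2;
     (H1 p δ ζ η 1 1 - H1 p δ ζ η 0 0) / 2, -(H1 p δ ζ η 0 1)]

def I2 (p δ : ℝ) (ζ η : ℂ) : Matrix (Fin 2) (Fin 2) ℝ :=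
  (1 / 2 : ℝ) •
    !![H2 p δ ζ η 1 0 - H2 p δ ζ η 0 1, H2 p δ ζ η 0 0 + H2 p δ ζ η 1 1;
       -(H2 p δ ζ η 0 0) - H2 p δ ζ η 1 1, H2 p δ ζ η 1 0 - H2 p δ ζ η 0 1]

def I3 (p δ : ℝ) (ζ η : ℂ) : Matrix (Fin 2) (Fin 2) ℝ :=
  !![H3 p δ ζ η 0 1, (H3 p δ ζ η 1 1 - H3 p δ ζ η 0 0) / 2;
     (H3 p δ ζ η 1 1 - H3 p δ ζ η 0 0) / 2, -(H3 p δ ζ η 0 1)]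


/-!
In `Ω_b` the Bellman function is `|ζ|^p + |η|^q + δ |ζ|² |η|^{2-q}`, so its `ζ`-Hessian is
`H₁ = p |ζ|^{p-4} ((p-2) ζ ζᵀ + |ζ|² I) + 2δ|η|^{2-q} I`. The map `M ↦ I₁(M)` is linear and
kills the identity, so `⟨(H₁ + tan φ · I₁) ω, ω⟩ - 2δ|η|^{2-q}|ω|²` equals `p |ζ|^{p-4}` times
`(p-1) X² - (p-2) tan φ · X Y + Y²`, where `X = ⟨ζ, ω⟩` and `Y = ζ × ω`. This binary quadratic
form is nonnegative as soon as `(p-2)² tan² φ ≤ 4(p-1)`, i.e. `cos φ ≥ 1 - 2/p`, which follows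
from `|φ| ≤ φ_{p_ε}` because `p ≤ p_ε`.
-/

open Filter Topology Asymptotics
open scoped RealInnerProductSpace

section Line

variable {F : Type*} [NormedAddCommGroup F] [NormedSpace ℝ F]

theorem hasDerivAt_line (w z : F) (t : ℝ) : HasDerivAt (fun t : ℝ => w + t • z) z t := by
  simpa using ((hasDerivAt_id t).smul_const z).const_add w

theorem eventually_norm_rpow_line_lt {p c : ℝ} (hp : 0 < p) {w : F} (hw : ‖w‖ ^ p < c) (z : F) :
    ∀ᶠ t : ℝ in 𝓝 0, ‖w + t • z‖ ^ p < c := by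
  have : ContinuousAt (fun t : ℝ => ‖w + t • z‖ ^ p) 0 := by
    fun_prop (discharger := exact .inr hp.le)
  exact this.eventually_lt continuousAt_const (by simpa using hw)

end Line

section NormRpow

variable {E : Type*} [NormedAddCommGroup E] [InnerProductSpace ℝ E]

theorem hasDerivAt_norm_rpow_line (w z : E) {p : ℝ} (hp : 1 < p) :
    HasDerivAt (fun t : ℝ => ‖w + t • z‖ ^ p) (p * (‖w‖ ^ (p - 2) * ⟪w, z⟫)) 0 := by
  have := (hasFDerivAt_norm_rpow (w + (0 : ℝ) • z) hp).comp_hasDerivAt 0 (hasDerivAt_line w z 0)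
  simpa [mul_assoc, Function.comp_def] using this

theorem hasDerivAt_norm_rpow_mul_inner_line (w e z : E) {p : ℝ} (hp : 2 < p) :
    HasDerivAt (fun s : ℝ => ‖w + s • e‖ ^ (p - 2) * ⟪w + s • e, z⟫)
      ((p - 2) * ‖w‖ ^ (p - 4) * ⟪w, e⟫ * ⟪w, z⟫ + ‖w‖ ^ (p - 2) * ⟪e, z⟫) 0 := by
  rcases eq_or_ne w 0 with rfl | hw
  -- `‖·‖ ^ (p - 2)` need not be differentiable at `0` (if `p < 3`), but the product is `o(s)`.
  · have hp2 : 0 < p - 2 := by linarith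
    simp only [zero_add, norm_zero, inner_zero_left, mul_zero, zero_rpow hp2.ne', zero_mul]
    rw [hasDerivAt_iff_isLittleO_nhds_zero]
    have hnorm : Tendsto (fun s : ℝ => ‖s • e‖ ^ (p - 2)) (𝓝 0) (𝓝 0) := by
      have : ContinuousAt (fun s : ℝ => ‖s • e‖ ^ (p - 2)) 0 := by
        fun_prop (discharger := exact .inr hp2.le)
      simpa [zero_rpow hp2.ne'] using this.tendsto
    have hinner : (fun s : ℝ => ⟪s • e, z⟫) =O[𝓝 0] fun s => s := by
      simpa [real_inner_smul_left, mul_comm] using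
        (isBigO_refl (fun s : ℝ => s) (𝓝 0)).const_mul_left ⟪e, z⟫
    simpa using ((isLittleO_one_iff ℝ).2 hnorm).mul_isBigO hinner
  · have hw2 : ‖w‖ ^ 2 ≠ 0 := by positivity
    have hsq_rpow (x : E) (r : ℝ) : (‖x‖ ^ 2) ^ r = ‖x‖ ^ (2 * r) := by
      rw [← rpow_natCast_mul (norm_nonneg x)]; norm_num
    have h := ((hasDerivAt_line w e 0).norm_sq.rpow_const (p := (p - 2) / 2)
      (.inl (by simpa using hw2))).mul ((hasDerivAt_line w e 0).inner ℝ (hasDerivAt_const 0 z))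
    simp only [hsq_rpow, zero_smul, add_zero, inner_zero_right, zero_add] at h
    rw [show 2 * ((p - 2) / 2) = p - 2 by ring, show 2 * ((p - 2) / 2 - 1) = p - 4 by ring] at h
    exact h.congr_deriv (by ring)

end NormRpow

section Bellman

theorem dir_zero : dir 0 = 1 := rfl

theorem dir_one : dir 1 = Complex.I := rfl

theorem real_inner_dir_zero (z : ℂ) : ⟪z, dir 0⟫ = z.re := by simp [dir_zero, Complex.inner]

theorem real_inner_dir_one (z : ℂ) : ⟪z, dir 1⟫ = z.im := by simp [dir_one, Complex.inner]

variable {p δ : ℝ} {ζ η : ℂ}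

theorem dζ_eq_of_lt (hp : 2 < p) (hb : ‖ζ‖ ^ p < ‖η‖ ^ qexp p) (j : Fin 2) :
    dζ p δ j ζ η =
      p * (‖ζ‖ ^ (p - 2) * ⟪ζ, dir j⟫) + 2 * (δ * ‖η‖ ^ (2 - qexp p)) * ⟪ζ, dir j⟫ := by
  have hQ : (fun t : ℝ => Q p δ (ζ + t * dir j) η) =ᶠ[𝓝 0] fun t =>
      ‖ζ + t • dir j‖ ^ p + ‖η‖ ^ qexp p + δ * (‖ζ + t • dir j‖ ^ (2 : ℝ) * ‖η‖ ^ (2 - qexp p)) := by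
    filter_upwards [eventually_norm_rpow_line_lt (by linarith) hb (dir j)] with t ht
    rw [Q, if_pos (by simpa [Complex.real_smul] using ht.le), Complex.real_smul]
  have h := ((hasDerivAt_norm_rpow_line ζ (dir j) (by linarith : 1 < p)).add_const (‖η‖ ^ qexp p)).add
    (((hasDerivAt_norm_rpow_line ζ (dir j) one_lt_two).mul_const (‖η‖ ^ (2 - qexp p))).const_mul δ)
  rw [dζ, hQ.deriv_eq]
  refine h.deriv.trans ?_
  rw [sub_self, rpow_zero]
  ring

theorem H1_eq_of_lt (hp : 2 < p) (hb : ‖ζ‖ ^ p < ‖η‖ ^ qexp p) (i j : Fin 2) :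
    H1 p δ ζ η i j =
      p * ((p - 2) * ‖ζ‖ ^ (p - 4) * ⟪ζ, dir i⟫ * ⟪ζ, dir j⟫ + ‖ζ‖ ^ (p - 2) * ⟪dir i, dir j⟫)
        + 2 * (δ * ‖η‖ ^ (2 - qexp p)) * ⟪dir i, dir j⟫ := by
  have hdζ : (fun s : ℝ => dζ p δ j (ζ + s * dir i) η) =ᶠ[𝓝 0] fun s =>
      p * (‖ζ + s • dir i‖ ^ (p - 2) * ⟪ζ + s • dir i, dir j⟫)
        + 2 * (δ * ‖η‖ ^ (2 - qexp p)) * ⟪ζ + s • dir i, dir j⟫ := by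
    filter_upwards [eventually_norm_rpow_line_lt (by linarith) hb (dir i)] with s hs
    rw [← Complex.real_smul, dζ_eq_of_lt hp hs]
  have h := ((hasDerivAt_norm_rpow_mul_inner_line ζ (dir i) (dir j) hp).const_mul p).add
    (((hasDerivAt_line ζ (dir i) 0).inner ℝ (hasDerivAt_const 0 (dir j))).const_mul
      (2 * (δ * ‖η‖ ^ (2 - qexp p))))
  rw [H1, Matrix.of_apply, hdζ.deriv_eq]
  refine h.deriv.trans ?_
  simp

theorem H1_add_smul_I1_quadForm_eq (hp : 2 < p) (hb : ‖ζ‖ ^ p < ‖η‖ ^ qexp p) (T : ℝ)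
    (ω : Fin 2 → ℝ) :
    ((H1 p δ ζ η + T • I1 p δ ζ η) *ᵥ ω) ⬝ᵥ ω =
      2 * (δ * ‖η‖ ^ (2 - qexp p)) * (ω ⬝ᵥ ω) + p * ‖ζ‖ ^ (p - 4) *
        ((p - 1) * (ζ.re * ω 0 + ζ.im * ω 1) ^ 2
          - (p - 2) * T * (ζ.re * ω 0 + ζ.im * ω 1) * (ζ.re * ω 1 - ζ.im * ω 0)
          + (ζ.re * ω 1 - ζ.im * ω 0) ^ 2) := by
  have hnorm : ‖ζ‖ ^ (p - 2) = ‖ζ‖ ^ (p - 4) * (ζ.re ^ 2 + ζ.im ^ 2) := by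
    rw [show p - 2 = p - 4 + (2 : ℕ) by push_cast; ring,
      rpow_add' (norm_nonneg ζ) (by push_cast; linarith), rpow_natCast, Complex.sq_norm,
      Complex.normSq_apply]
    ring
  simp only [dotProduct, mulVec, Fin.sum_univ_two, I1, Matrix.add_apply, Matrix.smul_apply,
    smul_eq_mul, of_apply, cons_val', cons_val_zero, cons_val_one, cons_val_fin_one,
    H1_eq_of_lt hp hb, real_inner_dir_zero, real_inner_dir_one, hnorm]
  simp only [dir_zero, dir_one, Complex.one_re, Complex.one_im, Complex.I_re, Complex.I_im]
  ring

end Bellman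

theorem quadratic_nonneg_of_sq_le {a b X Y : ℝ} (h : b ^ 2 ≤ 4 * a) :
    0 ≤ a * X ^ 2 - b * X * Y + Y ^ 2 := by
  nlinarith [sq_nonneg (b * X - 2 * Y), mul_nonneg (sub_nonneg.2 h) (sq_nonneg X)]

theorem le_cos_of_abs_le_arccos {a φ : ℝ} (ha₀ : -1 ≤ a) (ha₁ : a ≤ 1) (h : |φ| ≤ arccos a) :
    a ≤ cos φ := by
  simpa [cos_arccos ha₀ ha₁] using cos_le_cos_of_nonneg_of_le_pi (abs_nonneg φ) (arccos_le_pi a) h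

theorem one_sub_two_div_le_cos {p ε φ : ℝ} (hp : 2 < p) (hε₀ : 0 ≤ ε) (hε₁ : ε < 1)
    (hφ : |φ| ≤ arccos (1 - 2 / ((p - 2 * ε) / (1 - ε)))) : 1 - 2 / p ≤ cos φ := by
  have hpε : p ≤ (p - 2 * ε) / (1 - ε) := by
    rw [le_div_iff₀ (by linarith)]
    nlinarith
  have hp₀ : 0 < p := by linarith
  have h2p : 2 / p ≤ 1 := (div_le_one hp₀).2 hp.le
  have h2p₀ : 0 ≤ 2 / p := div_nonneg zero_le_two hp₀.le
  refine le_cos_of_abs_le_arccos (by linarith) (by linarith) (hφ.trans (arccos_le_arccos ?_))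
  gcongr

theorem sq_mul_tan_le_of_one_sub_two_div_le_cos {p φ : ℝ} (hp : 2 < p) (h : 1 - 2 / p ≤ cos φ) :
    ((p - 2) * tan φ) ^ 2 ≤ 4 * (p - 1) := by
  have hp₀ : 0 < p := by linarith
  have hpc : p - 2 ≤ p * cos φ := by
    have := mul_le_mul_of_nonneg_left h hp₀.le
    rwa [mul_sub, mul_one, mul_div_cancel₀ _ hp₀.ne'] at this
  have hc : 0 < cos φ := by nlinarith
  rw [tan_eq_sin_div_cos, mul_div_assoc', div_pow, div_le_iff₀ (by positivity), mul_pow, sin_sq]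
  nlinarith

theorem stmt12_general (p ε δ φ : ℝ) (hp : 2 < p) (hε : ε ∈ Set.Ioo (0 : ℝ) (1 / 2))
    (hφ : |φ| ≤ Real.arccos (1 - 2 / ((p - 2 * ε) / (1 - ε))))
    (ζ η : ℂ) (hb : ‖ζ‖ ^ p < ‖η‖ ^ qexp p) (ω₁ : Fin 2 → ℝ) :
    2 * δ * ‖η‖ ^ (2 - qexp p) * (ω₁ ⬝ᵥ ω₁) ≤
      ((H1 p δ ζ η + Real.tan φ • I1 p δ ζ η).mulVec ω₁) ⬝ᵥ ω₁ := by
  obtain ⟨hε₀, hε₁⟩ := hε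
  have hT := sq_mul_tan_le_of_one_sub_two_div_le_cos hp
    (one_sub_two_div_le_cos hp hε₀.le (by linarith) hφ)
  have hform := mul_nonneg (mul_nonneg (by linarith : 0 ≤ p) (rpow_nonneg (norm_nonneg ζ) (p - 4)))
    (quadratic_nonneg_of_sq_le hT (X := ζ.re * ω₁ 0 + ζ.im * ω₁ 1) (Y := ζ.re * ω₁ 1 - ζ.im * ω₁ 0))
  rw [H1_add_smul_I1_quadForm_eq hp hb]
  linarith

theorem stmt12 (p ε δ φ : ℝ) (hp : 2 < p) (hε : ε ∈ Set.Ioo (0 : ℝ) (1 / 2))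
    (hδ : δ = 2 * qexp p * (qexp p - 1) * ε / 85)
    (hφ : |φ| ≤ Real.arccos (1 - 2 / ((p - 2 * ε) / (1 - ε))))
    (ζ η : ℂ) (hb : ‖ζ‖ ^ p < ‖η‖ ^ qexp p) (ω₁ : Fin 2 → ℝ) :
    2 * δ * ‖η‖ ^ (2 - qexp p) * (ω₁ ⬝ᵥ ω₁) ≤
      ((H1 p δ ζ η + Real.tan φ • I1 p δ ζ η).mulVec ω₁) ⬝ᵥ ω₁ :=
  stmt12_general p ε δ φ hp hε hφ ζ η hb ω₁
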